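/- The finiteness parameter of the Apollonian system equals 1/2: the infimum of the set of t ≥ 0 for which the series Σ_{(k,n)∈I} ‖φ'_{k,n}‖_∞^t converges is equal to 1/2 (equivalently, the series converges for every t > 1/2 and diverges for every 0 ≤ t ≤ 1/2). -/

import Mathlib

open Complex Metric Set
open scoped ENNReal

noncomputable section

/-- λ = √3 -/
def lam : ℝ := Real.sqrt 3

/-- The Möbius map f(z) = ((λ−1)z+1)/(−z+λ+1). -/
def apolF : ℂ → ℂ := fun z => (((lam : ℂ) - 1) * z + 1) / (-z + (lam : ℂ) + 1)

/-- Rotation by angle θ. -/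
def Rot (θ : ℝ) : ℂ → ℂ := fun z => Complex.exp ((θ : ℂ) * Complex.I) * z

/-- θ_k = (−1)^k · 2π/3 -/
def thetaA (k : ℕ) : ℝ := (-1 : ℝ) ^ k * (2 * Real.pi / 3)

/-- θ'_k = 2πk/3 -/
def thetaB (k : ℕ) : ℝ := 2 * Real.pi * k / 3

/-- The Apollonian generators φ_{k,n} = R_{θ'_k} ∘ f^n ∘ R_{θ_k} ∘ f. -/
def phi (k n : ℕ) : ℂ → ℂ := Rot (thetaB k) ∘ (apolF^[n]) ∘ Rot (thetaA k) ∘ apolF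

/-- The closed unit disk 𝔻. -/
def unitD : Set ℂ := Metric.closedBall (0 : ℂ) 1

/-- The Apollonian alphabet I = {1,…,6} × {1,2,3,…}. -/
def apolI : Set (ℕ × ℕ) := {p | 1 ≤ p.1 ∧ p.1 ≤ 6 ∧ 1 ≤ p.2}

/-- ‖φ'_{k,n}‖_∞ = max over the closed unit disk of |φ'_{k,n}|. -/
def Dnorm (k n : ℕ) : ℝ := sSup ((fun z => ‖deriv (phi k n) z‖) '' unitD)


/-!
`f` is parabolic, so `f^n` and its derivative are explicit, and `|φ'_{k,n}(z)| = 9 / |c z + d|²`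
with `c, d` depending on `n` and `e^{iθ_k}`. Since `Re e^{iθ_k} = -1/2`, one computes
`|d| - |c| ≥ 2n` and `|d| ≤ 10n`, so `‖φ'_{k,n}‖_∞ ≍ n⁻²` uniformly in `k`, and the series
converges exactly when `∑ n^{-2t}` does, that is for `t > 1/2`.
-/

lemma lam_sq : lam ^ 2 = 3 := Real.sq_sqrt (by norm_num)

lemma lt_lam : (173 : ℝ) / 100 < lam := (Real.lt_sqrt (by norm_num)).2 (by norm_num)

lemma lam_lt : lam < (174 : ℝ) / 100 := (Real.sqrt_lt' (by norm_num)).2 (by norm_num)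

lemma ofReal_lam_sq : (lam : ℂ) ^ 2 = 3 := by
  rw [← Complex.ofReal_pow, lam_sq]; norm_num

lemma mem_unitD {z : ℂ} : z ∈ unitD ↔ ‖z‖ ≤ 1 := by
  simp [unitD]

lemma zero_mem_unitD : (0 : ℂ) ∈ unitD := Metric.mem_closedBall_self zero_le_one

lemma lam_le_norm_add_sub_mul (n : ℕ) {z : ℂ} (hz : z ∈ unitD) :
    lam ≤ ‖(lam : ℂ) + n - n * z‖ := by
  have hnz : ‖(n : ℂ) * z‖ ≤ n := by
    simpa [norm_mul] using mul_le_of_le_one_right (Nat.cast_nonneg n) (mem_unitD.1 hz)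
  have hlam : ‖(lam : ℂ) + n‖ = lam + n := by
    rw [← Complex.ofReal_natCast, ← Complex.ofReal_add, Complex.norm_real, Real.norm_eq_abs,
      abs_of_nonneg (by linarith [lt_lam, (Nat.cast_nonneg n : (0 : ℝ) ≤ n)])]
  linarith [norm_sub_norm_le ((lam : ℂ) + n) (n * z)]

lemma add_sub_mul_ne_zero (n : ℕ) {z : ℂ} (hz : z ∈ unitD) : (lam : ℂ) + n - n * z ≠ 0 := by
  intro h
  have := lam_le_norm_add_sub_mul n hz
  rw [h, norm_zero] at this
  linarith [lt_lam]

lemma apolF_denom_ne_zero {z : ℂ} (hz : z ∈ unitD) : -z + (lam : ℂ) + 1 ≠ 0 := by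
  convert add_sub_mul_ne_zero 1 hz using 1
  push_cast
  ring

lemma apolF_mapsTo : MapsTo apolF unitD unitD := by
  intro z hz
  have hden := apolF_denom_ne_zero hz
  rw [mem_unitD] at hz ⊢
  rw [apolF, norm_div, div_le_one (norm_pos_iff.2 hden), ← sq_le_sq₀ (norm_nonneg _)
    (norm_nonneg _), Complex.sq_norm, Complex.sq_norm]
  have hz2 : z.re * z.re + z.im * z.im ≤ 1 := by
    rw [← Complex.normSq_apply, ← Complex.sq_norm]; nlinarith [norm_nonneg z]
  have hre : z.re ≤ 1 := by nlinarith [sq_nonneg z.im, sq_nonneg (z.re - 1)]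
  simp only [Complex.normSq_apply, Complex.add_re, Complex.add_im, Complex.mul_re,
    Complex.mul_im, Complex.sub_re, Complex.sub_im, Complex.neg_re, Complex.neg_im,
    Complex.one_re, Complex.one_im, Complex.ofReal_re, Complex.ofReal_im]
  nlinarith [lam_sq, lt_lam, mul_nonneg (by nlinarith [lt_lam] : (0 : ℝ) ≤ 2 * lam - 3)
    (sq_nonneg z.im), mul_nonneg (by linarith : (0 : ℝ) ≤ 1 - z.re)
    (by nlinarith [lt_lam] : (0 : ℝ) ≤ 3 + 2 * lam - (2 * lam - 3) * z.re)]

lemma hasDerivAt_apolF {z : ℂ} (hz : z ∈ unitD) :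
    HasDerivAt apolF (3 / (-z + (lam : ℂ) + 1) ^ 2) z := by
  have hnum : HasDerivAt (fun w : ℂ => ((lam : ℂ) - 1) * w + 1) ((lam : ℂ) - 1) z := by
    simpa using ((hasDerivAt_id z).const_mul ((lam : ℂ) - 1)).add_const 1
  have hden : HasDerivAt (fun w : ℂ => -w + (lam : ℂ) + 1) (-1) z := by
    simpa using ((hasDerivAt_id z).neg.add_const (lam : ℂ)).add_const 1
  refine (hnum.div hden (apolF_denom_ne_zero hz)).congr_deriv ?_
  congr 1
  linear_combination ofReal_lam_sq

lemma apolF_denom_mul {z : ℂ} (hz : z ∈ unitD) (n : ℕ) :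
    ((lam : ℂ) + n - n * apolF z) * (-z + lam + 1) =
      lam * ((lam : ℂ) + ↑(n + 1) - ↑(n + 1) * z) := by
  have hden := apolF_denom_ne_zero hz
  rw [apolF]
  field_simp
  push_cast
  ring

-- The matrix of `apolF` is `λ • 1 + N` with `N ^ 2 = 0`, so its `n`-th power is proportional to
-- `λ • 1 + n • N`: `apolF^[n] z = ((λ - n) z + n) / ((λ + n) - n z)`, of determinant `λ² = 3`.
lemma hasDerivAt_apolF_iterate (n : ℕ) {z : ℂ} (hz : z ∈ unitD) :
    HasDerivAt apolF^[n] (3 / ((lam : ℂ) + n - n * z) ^ 2) z := by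
  induction n generalizing z with
  | zero =>
    refine (hasDerivAt_id z).congr_deriv ?_
    simp [ofReal_lam_sq]
  | succ n ih =>
    rw [Function.iterate_succ]
    refine ((ih (apolF_mapsTo hz)).comp z (hasDerivAt_apolF hz)).congr_deriv ?_
    have hQ := add_sub_mul_ne_zero (n + 1) hz
    have hA := add_sub_mul_ne_zero n (apolF_mapsTo hz)
    have hB := apolF_denom_ne_zero hz
    have hprod := apolF_denom_mul hz n
    rw [div_mul_div_comm, ← mul_pow, hprod, mul_pow, ofReal_lam_sq]
    field_simp

lemma norm_Rot (θ : ℝ) (z : ℂ) : ‖Rot θ z‖ = ‖z‖ := by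
  simp [Rot]

lemma hasDerivAt_Rot (θ : ℝ) (z : ℂ) : HasDerivAt (Rot θ) (exp (θ * I)) z := by
  have h := (hasDerivAt_id' z).const_mul (exp (θ * I))
  rw [mul_one] at h
  exact h

def coeffC (n : ℕ) (u : ℂ) : ℂ := -(n * u * (lam - 1)) - (lam + n)

def coeffD (n : ℕ) (u : ℂ) : ℂ := (lam + n) * (lam + 1) - n * u

lemma add_sub_mul_apolF_mul {z : ℂ} (hz : z ∈ unitD) (n : ℕ) (u : ℂ) :
    ((lam : ℂ) + n - n * (u * apolF z)) * (-z + lam + 1) = coeffC n u * z + coeffD n u := by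
  have hden := apolF_denom_ne_zero hz
  rw [apolF, coeffC, coeffD]
  field_simp
  ring

lemma norm_deriv_phi (k n : ℕ) {z : ℂ} (hz : z ∈ unitD) :
    ‖deriv (phi k n) z‖ =
      9 / ‖coeffC n (exp (thetaA k * I)) * z + coeffD n (exp (thetaA k * I))‖ ^ 2 := by
  have hw : Rot (thetaA k) (apolF z) ∈ unitD := by
    rw [mem_unitD, norm_Rot, ← mem_unitD]; exact apolF_mapsTo hz
  have hphi := (hasDerivAt_Rot (thetaB k) _).comp z ((hasDerivAt_apolF_iterate n hw).comp z
    ((hasDerivAt_Rot (thetaA k) _).comp z (hasDerivAt_apolF hz)))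
  rw [phi, hphi.deriv, ← add_sub_mul_apolF_mul hz, Rot]
  simp only [norm_mul, norm_div, norm_pow, norm_exp_ofReal_mul_I]
  have hA := norm_pos_iff.2 (add_sub_mul_ne_zero n hw)
  have hB := norm_pos_iff.2 (apolF_denom_ne_zero hz)
  rw [Rot] at hA
  field_simp
  norm_num

lemma im_sq_of_re_eq {u : ℂ} (hre : u.re = -1 / 2) (hu : ‖u‖ = 1) : u.im ^ 2 = 3 / 4 := by
  have h := Complex.sq_norm u
  rw [hu, Complex.normSq_apply, hre] at h
  nlinarith

lemma sq_norm_coeffC {u : ℂ} (hre : u.re = -1 / 2) (hu : ‖u‖ = 1) (n : ℕ) :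
    ‖coeffC n u‖ ^ 2 = (n * (lam - 1)) ^ 2 + (lam + n) ^ 2 - n * (lam - 1) * (lam + n) := by
  have him := im_sq_of_re_eq hre hu
  rw [Complex.sq_norm, Complex.normSq_apply]
  simp only [coeffC, Complex.sub_re, Complex.sub_im, Complex.neg_re, Complex.neg_im,
    Complex.mul_re, Complex.mul_im, Complex.add_re, Complex.add_im, Complex.ofReal_re,
    Complex.ofReal_im, Complex.natCast_re, Complex.natCast_im, Complex.one_re, Complex.one_im]
  ring_nf
  rw [hre, him]
  ring

lemma sq_norm_coeffD {u : ℂ} (hre : u.re = -1 / 2) (hu : ‖u‖ = 1) (n : ℕ) :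
    ‖coeffD n u‖ ^ 2 = ((lam + n) * (lam + 1)) ^ 2 + n ^ 2 + (lam + n) * (lam + 1) * n := by
  have him := im_sq_of_re_eq hre hu
  rw [Complex.sq_norm, Complex.normSq_apply]
  simp only [coeffD, Complex.sub_re, Complex.sub_im, Complex.mul_re, Complex.mul_im,
    Complex.add_re, Complex.add_im, Complex.ofReal_re, Complex.ofReal_im, Complex.natCast_re,
    Complex.natCast_im, Complex.one_re, Complex.one_im]
  ring_nf
  rw [hre, him]
  ring

lemma norm_coeffC_add_le_norm_coeffD {u : ℂ} (hre : u.re = -1 / 2) (hu : ‖u‖ = 1) (n : ℕ) :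
    ‖coeffC n u‖ + 2 * n ≤ ‖coeffD n u‖ := by
  have hc := sq_norm_coeffC hre hu n
  have hd := sq_norm_coeffD hre hu n
  have hn := Nat.cast_nonneg (α := ℝ) n
  have hc_le : ‖coeffC n u‖ ≤ 9 / 10 * n + 2 :=
    le_of_pow_le_pow_left₀ two_ne_zero (by positivity) (by nlinarith [lam_sq, lt_lam, lam_lt])
  refine le_of_pow_le_pow_left₀ two_ne_zero (norm_nonneg _) ?_
  nlinarith [lam_sq, lt_lam, lam_lt, norm_nonneg (coeffC n u)]

lemma norm_coeffD_le {u : ℂ} (hre : u.re = -1 / 2) (hu : ‖u‖ = 1) {n : ℕ} (hn : 1 ≤ n) :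
    ‖coeffD n u‖ ≤ 10 * n := by
  have hd := sq_norm_coeffD hre hu n
  have hn' : (1 : ℝ) ≤ n := by exact_mod_cast hn
  refine le_of_pow_le_pow_left₀ two_ne_zero (by positivity) ?_
  nlinarith [lam_sq, lt_lam, lam_lt]

lemma re_exp_thetaA (k : ℕ) : (exp (thetaA k * I)).re = -1 / 2 := by
  have h : Real.cos (2 * Real.pi / 3) = -1 / 2 := by
    rw [show 2 * Real.pi / 3 = Real.pi - Real.pi / 3 by ring, Real.cos_pi_sub,
      Real.cos_pi_div_three]
    norm_num
  rw [exp_ofReal_mul_I_re, thetaA]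
  rcases neg_one_pow_eq_or ℝ k with hk | hk <;> simp [hk, h]

lemma norm_deriv_phi_le (k : ℕ) {n : ℕ} (hn : 1 ≤ n) {z : ℂ} (hz : z ∈ unitD) :
    ‖deriv (phi k n) z‖ ≤ 9 / 4 * ((n : ℝ) ^ 2)⁻¹ := by
  set u := exp (thetaA k * I)
  have hgap : ‖coeffC n u‖ + 2 * n ≤ ‖coeffD n u‖ :=
    norm_coeffC_add_le_norm_coeffD (re_exp_thetaA k) (norm_exp_ofReal_mul_I _) n
  have hcz : ‖coeffC n u * z‖ ≤ ‖coeffC n u‖ := by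
    rw [norm_mul]; exact mul_le_of_le_one_right (norm_nonneg _) (mem_unitD.1 hz)
  have htri : ‖coeffD n u‖ ≤ ‖coeffC n u * z + coeffD n u‖ + ‖coeffC n u * z‖ := by
    simpa using norm_sub_le (coeffC n u * z + coeffD n u) (coeffC n u * z)
  have hn' : (1 : ℝ) ≤ n := by exact_mod_cast hn
  calc ‖deriv (phi k n) z‖ = 9 / ‖coeffC n u * z + coeffD n u‖ ^ 2 := norm_deriv_phi k n hz
    _ ≤ 9 / (2 * n) ^ 2 := by gcongr; linarith
    _ = 9 / 4 * ((n : ℝ) ^ 2)⁻¹ := by ring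

lemma Dnorm_le (k : ℕ) {n : ℕ} (hn : 1 ≤ n) : Dnorm k n ≤ 9 / 4 * ((n : ℝ) ^ 2)⁻¹ :=
  csSup_le ⟨_, Set.mem_image_of_mem _ zero_mem_unitD⟩
    (Set.forall_mem_image.2 fun _ hz => norm_deriv_phi_le k hn hz)

lemma le_Dnorm (k : ℕ) {n : ℕ} (hn : 1 ≤ n) : 9 / 100 * ((n : ℝ) ^ 2)⁻¹ ≤ Dnorm k n := by
  have hbdd : BddAbove ((fun z => ‖deriv (phi k n) z‖) '' unitD) :=
    ⟨_, Set.forall_mem_image.2 fun _ hz => norm_deriv_phi_le k hn hz⟩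
  refine le_trans ?_ (le_csSup hbdd (Set.mem_image_of_mem _ zero_mem_unitD))
  have hd := norm_coeffD_le (re_exp_thetaA k) (norm_exp_ofReal_mul_I _) hn
  have hgap := norm_coeffC_add_le_norm_coeffD (re_exp_thetaA k) (norm_exp_ofReal_mul_I _) n
  have hn' : (1 : ℝ) ≤ n := by exact_mod_cast hn
  calc 9 / 100 * ((n : ℝ) ^ 2)⁻¹ = 9 / (10 * n) ^ 2 := by ring
    _ ≤ 9 / ‖coeffD n (exp (thetaA k * I))‖ ^ 2 := by
      gcongr
      exact pow_pos (by linarith [norm_nonneg (coeffC n (exp (thetaA k * I)))]) 2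
    _ = ‖deriv (phi k n) 0‖ := by rw [norm_deriv_phi k n zero_mem_unitD, mul_zero, zero_add]

lemma summable_iff_of_le_of_le {ι : Type*} {f g : ι → ℝ} {a b : ℝ} (ha : 0 < a) (hg : 0 ≤ g)
    (hlow : ∀ i, a * g i ≤ f i) (hup : ∀ i, f i ≤ b * g i) : Summable f ↔ Summable g := by
  refine ⟨fun hf => ?_, fun hg' => (hg'.mul_left b).of_nonneg_of_le (fun i => ?_) hup⟩
  · refine (hf.mul_left a⁻¹).of_nonneg_of_le hg fun i => ?_
    rw [le_inv_mul_iff₀ ha]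
    exact hlow i
  · exact (mul_nonneg ha.le (hg i)).trans (hlow i)

lemma summable_prod_snd_iff {α β : Type*} {s : Set α} {t : Set β} [Finite s] (hs : s.Nonempty)
    {g : β → ℝ} (hg : 0 ≤ g) :
    Summable (fun p : ↥(s ×ˢ t) => g p.1.2) ↔ Summable (fun y : t => g y) := by
  rw [← (Equiv.Set.prod s t).symm.summable_iff]
  refine (summable_prod_of_nonneg fun _ => hg _).trans ⟨fun h => h.1 ⟨_, hs.some_mem⟩, fun h =>
    ⟨fun _ => h, Summable.of_finite⟩⟩

lemma apolI_eq : apolI = Icc 1 6 ×ˢ {0}ᶜ := by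
  ext ⟨k, n⟩
  simp only [apolI, mem_ofPred_eq, mem_prod, mem_Icc, mem_compl_singleton_iff]
  omega

lemma summable_apolI_iff {g : ℕ → ℝ} (hg : 0 ≤ g) :
    Summable (fun p : apolI => g p.1.2) ↔ Summable g := by
  rw [apolI_eq, summable_prod_snd_iff (nonempty_Icc.2 (by norm_num)) hg]
  exact (Set.finite_singleton 0).summable_compl_iff

lemma inv_sq_rpow {x : ℝ} (hx : 0 ≤ x) (t : ℝ) : (x ^ 2)⁻¹ ^ t = x ^ (-(2 * t)) := by
  rw [Real.inv_rpow (by positivity), ← Real.rpow_natCast_mul hx, Real.rpow_neg hx]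
  norm_num

lemma summable_Dnorm_rpow_iff {t : ℝ} (ht : 0 ≤ t) :
    Summable (fun p : apolI => Dnorm p.1.1 p.1.2 ^ t) ↔ 1 / 2 < t := by
  have hbounds (p : apolI) :
      (9 / 100 : ℝ) ^ t * (p.1.2 : ℝ) ^ (-(2 * t)) ≤ Dnorm p.1.1 p.1.2 ^ t ∧
        Dnorm p.1.1 p.1.2 ^ t ≤ (9 / 4 : ℝ) ^ t * (p.1.2 : ℝ) ^ (-(2 * t)) := by
    have hn : 1 ≤ p.1.2 := p.2.2.2
    have hlow := le_Dnorm p.1.1 hn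
    rw [← inv_sq_rpow (Nat.cast_nonneg _), ← Real.mul_rpow (by norm_num) (by positivity),
      ← Real.mul_rpow (by norm_num) (by positivity)]
    exact ⟨Real.rpow_le_rpow (by positivity) hlow ht,
      Real.rpow_le_rpow (le_trans (by positivity) hlow) (Dnorm_le p.1.1 hn) ht⟩
  have hpos : (0 : ℕ → ℝ) ≤ fun n : ℕ => (n : ℝ) ^ (-(2 * t)) := fun n => by positivity
  rw [summable_iff_of_le_of_le (by positivity) (fun p => hpos p.1.2) (fun p => (hbounds p).1)
    (fun p => (hbounds p).2), summable_apolI_iff hpos, Real.summable_nat_rpow]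
  constructor <;> intro h <;> linarith

/-- The finiteness parameter of the Apollonian system equals 1/2: the series
Σ_{(k,n)∈I} ‖φ'_{k,n}‖_∞^t converges for every t > 1/2 and diverges for 0 ≤ t ≤ 1/2. -/
theorem apollonian_finiteness_parameter :
    (∀ t : ℝ, 1 / 2 < t →
      Summable (fun p : apolI => Dnorm (p : ℕ × ℕ).1 (p : ℕ × ℕ).2 ^ t)) ∧
    (∀ t : ℝ, 0 ≤ t → t ≤ 1 / 2 →
      ¬ Summable (fun p : apolI => Dnorm (p : ℕ × ℕ).1 (p : ℕ × ℕ).2 ^ t)) :=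
  ⟨fun _ ht => (summable_Dnorm_rpow_iff (by linarith)).2 ht,
    fun _ ht0 ht h => ht.not_gt ((summable_Dnorm_rpow_iff ht0).1 h)⟩
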